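/- arXiv:2401.00477 — 7 statements merged into one kernel-verified Lean document; each statement's English description precedes it below -/
import Mathlib

section
/- Fix N ≥ 1, reals σ₁ ≠ 0, σ₂ ≠ 0, and η₂ ∈ ℝ. For δ ∈ ℝ let A(δ) := { max(P₁(g₁,F₁,g₂,F₂), P₂(g₁,F₁,g₂,F₂)) : g₁, g₂ ∈ ℝ^N, F₁, F₂ ∈ ℝ^{N×N} strictly lower triangular, g₁ᵀQ₁⁻¹g₁ = δ, g₂ᵀQ₂⁻¹g₂ = η₂ } ⊆ ℝ, and let h(δ) := inf A(δ). If 0 < δ₁ ≤ δ₂ and A(δ₂) is nonempty, then A(δ₁) is nonempty and h(δ₁) ≤ h(δ₂); that is, the optimal maximum transmit power is nondecreasing in the target SNR η₁ of User 1 when η₂ is fixed. -/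
open Matrix

noncomputable section

/-- A matrix is strictly lower triangular: `A i j = 0` whenever `i ≤ j`. -/
def Slt {N : ℕ} (A : Matrix (Fin N) (Fin N) ℝ) : Prop :=
  ∀ i j : Fin N, i ≤ j → A i j = 0

/-- Squared Frobenius norm `‖A‖_F² = trace (Aᵀ A)`. -/
def frobSq {N : ℕ} (A : Matrix (Fin N) (Fin N) ℝ) : ℝ := Matrix.trace (Aᵀ * A)

/-- `Q₁ = σ₁²(I + F₁F₂)(I + F₁F₂)ᵀ + σ₂²F₁F₁ᵀ`. -/
def Q1 {N : ℕ} (σ₁ σ₂ : ℝ) (F₁ F₂ : Matrix (Fin N) (Fin N) ℝ) :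
    Matrix (Fin N) (Fin N) ℝ :=
  σ₁ ^ 2 • ((1 + F₁ * F₂) * (1 + F₁ * F₂)ᵀ) + σ₂ ^ 2 • (F₁ * F₁ᵀ)

/-- `Q₂ = σ₁²F₂F₂ᵀ + σ₂²I`. -/
def Q2 {N : ℕ} (σ₁ σ₂ : ℝ) (F₂ : Matrix (Fin N) (Fin N) ℝ) :
    Matrix (Fin N) (Fin N) ℝ :=
  σ₁ ^ 2 • (F₂ * F₂ᵀ) + σ₂ ^ 2 • 1

/-- Transmit power of User 1:
`P₁ = ‖g₁‖² + ‖F₁g₂‖² + σ₁²‖F₁F₂‖_F² + σ₂²‖F₁‖_F²`. -/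
def P1 {N : ℕ} (σ₁ σ₂ : ℝ) (g₁ : Fin N → ℝ) (F₁ : Matrix (Fin N) (Fin N) ℝ)
    (g₂ : Fin N → ℝ) (F₂ : Matrix (Fin N) (Fin N) ℝ) : ℝ :=
  g₁ ⬝ᵥ g₁ + (F₁.mulVec g₂) ⬝ᵥ (F₁.mulVec g₂)
    + σ₁ ^ 2 * frobSq (F₁ * F₂) + σ₂ ^ 2 * frobSq F₁

/-- Transmit power of User 2:
`P₂ = ‖(I + F₂F₁)g₂‖² + ‖F₂g₁‖² + σ₁²‖F₂(I + F₁F₂)‖_F² + σ₂²‖F₂F₁‖_F²`. -/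
def P2 {N : ℕ} (σ₁ σ₂ : ℝ) (g₁ : Fin N → ℝ) (F₁ : Matrix (Fin N) (Fin N) ℝ)
    (g₂ : Fin N → ℝ) (F₂ : Matrix (Fin N) (Fin N) ℝ) : ℝ :=
  ((1 + F₂ * F₁).mulVec g₂) ⬝ᵥ ((1 + F₂ * F₁).mulVec g₂)
    + (F₂.mulVec g₁) ⬝ᵥ (F₂.mulVec g₁)
    + σ₁ ^ 2 * frobSq (F₂ * (1 + F₁ * F₂)) + σ₂ ^ 2 * frobSq (F₂ * F₁)

/-- The set of achievable max-power values at target SNR pair `(δ, η₂)`. -/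
def Apow (N : ℕ) (σ₁ σ₂ η₂ δ : ℝ) : Set ℝ :=
  { p | ∃ (g₁ g₂ : Fin N → ℝ) (F₁ F₂ : Matrix (Fin N) (Fin N) ℝ),
      Slt F₁ ∧ Slt F₂
      ∧ g₁ ⬝ᵥ (Q1 σ₁ σ₂ F₁ F₂)⁻¹.mulVec g₁ = δ
      ∧ g₂ ⬝ᵥ (Q2 σ₁ σ₂ F₂)⁻¹.mulVec g₂ = η₂
      ∧ p = max (P1 σ₁ σ₂ g₁ F₁ g₂ F₂) (P2 σ₁ σ₂ g₁ F₁ g₂ F₂) }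


lemma dotSelf_nonneg {N : ℕ} (v : Fin N → ℝ) : 0 ≤ v ⬝ᵥ v := by
  have h : v ⬝ᵥ v = ∑ i, v i * v i := rfl
  rw [h]
  exact Finset.sum_nonneg fun i _ => mul_self_nonneg _

lemma frobSq_nonneg {N : ℕ} (A : Matrix (Fin N) (Fin N) ℝ) : 0 ≤ frobSq A := by
  have h : frobSq A = ∑ i, ∑ j, A j i * A j i := by
    simp [frobSq, Matrix.trace, Matrix.mul_apply, Matrix.diag]
  rw [h]
  exact Finset.sum_nonneg fun i _ => Finset.sum_nonneg fun j _ => mul_self_nonneg _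

lemma P1_nonneg {N : ℕ} (σ₁ σ₂ : ℝ) (g₁ : Fin N → ℝ) (F₁ : Matrix (Fin N) (Fin N) ℝ)
    (g₂ : Fin N → ℝ) (F₂ : Matrix (Fin N) (Fin N) ℝ) : 0 ≤ P1 σ₁ σ₂ g₁ F₁ g₂ F₂ := by
  have h1 := dotSelf_nonneg g₁
  have h2 := dotSelf_nonneg (F₁.mulVec g₂)
  have h3 := mul_nonneg (sq_nonneg σ₁) (frobSq_nonneg (F₁ * F₂))
  have h4 := mul_nonneg (sq_nonneg σ₂) (frobSq_nonneg F₁)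
  unfold P1; linarith

lemma Apow_nonneg {N : ℕ} (σ₁ σ₂ η₂ δ : ℝ) {p : ℝ} (hp : p ∈ Apow N σ₁ σ₂ η₂ δ) :
    0 ≤ p := by
  obtain ⟨g₁, g₂, F₁, F₂, _, _, _, _, hp⟩ := hp
  have := P1_nonneg σ₁ σ₂ g₁ F₁ g₂ F₂
  exact hp ▸ le_trans this (le_max_left _ _)

lemma dot_smul_mulVec {N : ℕ} (t : ℝ) (M : Matrix (Fin N) (Fin N) ℝ) (v : Fin N → ℝ) :
    (t • v) ⬝ᵥ M.mulVec (t • v) = t ^ 2 * (v ⬝ᵥ M.mulVec v) := by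
  rw [Matrix.mulVec_smul, smul_dotProduct, dotProduct_smul,
    smul_eq_mul, smul_eq_mul]; ring

/-- The optimal maximum transmit power is nondecreasing in the
target SNR `η₁ = δ` of User 1, for fixed `η₂`. -/
theorem max_power_monotone_in_snr {N : ℕ} (hN : 1 ≤ N)
    (σ₁ σ₂ : ℝ) (hσ₁ : σ₁ ≠ 0) (hσ₂ : σ₂ ≠ 0) (η₂ : ℝ)
    (δ₁ δ₂ : ℝ) (h0 : 0 < δ₁) (h12 : δ₁ ≤ δ₂)
    (hne : (Apow N σ₁ σ₂ η₂ δ₂).Nonempty) :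
    (Apow N σ₁ σ₂ η₂ δ₁).Nonempty
    ∧ sInf (Apow N σ₁ σ₂ η₂ δ₁) ≤ sInf (Apow N σ₁ σ₂ η₂ δ₂) := by
  have hδ₂ : 0 < δ₂ := lt_of_lt_of_le h0 h12
  have hbdd : BddBelow (Apow N σ₁ σ₂ η₂ δ₁) :=
    ⟨0, fun x hx => Apow_nonneg _ _ _ _ hx⟩
  -- key: for each p in A(δ₂) there is p' in A(δ₁) with p' ≤ p
  have key : ∀ p ∈ Apow N σ₁ σ₂ η₂ δ₂,
      ∃ p' ∈ Apow N σ₁ σ₂ η₂ δ₁, p' ≤ p := by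
    intro p hp
    obtain ⟨g₁, g₂, F₁, F₂, hF₁, hF₂, hδ, hη, hpeq⟩ := hp
    set t : ℝ := Real.sqrt (δ₁ / δ₂) with ht
    have ht2 : t ^ 2 = δ₁ / δ₂ := Real.sq_sqrt (le_of_lt (div_pos h0 hδ₂))
    have ht2le : t ^ 2 ≤ 1 := by
      rw [ht2]; exact div_le_one_of_le₀ h12 hδ₂.le
    have ht2nn : 0 ≤ t ^ 2 := sq_nonneg t
    refine ⟨max (P1 σ₁ σ₂ (t • g₁) F₁ g₂ F₂) (P2 σ₁ σ₂ (t • g₁) F₁ g₂ F₂),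
      ⟨t • g₁, g₂, F₁, F₂, hF₁, hF₂, ?_, hη, rfl⟩, ?_⟩
    · rw [dot_smul_mulVec, hδ, ht2]
      field_simp
    · rw [hpeq]
      have hP1 : P1 σ₁ σ₂ (t • g₁) F₁ g₂ F₂ ≤ P1 σ₁ σ₂ g₁ F₁ g₂ F₂ := by
        unfold P1
        have : (t • g₁) ⬝ᵥ (t • g₁) = t ^ 2 * (g₁ ⬝ᵥ g₁) := by
          rw [smul_dotProduct, dotProduct_smul, smul_eq_mul, smul_eq_mul]; ring
        rw [this]
        have := dotSelf_nonneg g₁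
        nlinarith
      have hP2 : P2 σ₁ σ₂ (t • g₁) F₁ g₂ F₂ ≤ P2 σ₁ σ₂ g₁ F₁ g₂ F₂ := by
        unfold P2
        have h1 : (F₂.mulVec (t • g₁)) ⬝ᵥ (F₂.mulVec (t • g₁))
            = t ^ 2 * ((F₂.mulVec g₁) ⬝ᵥ (F₂.mulVec g₁)) := by
          rw [Matrix.mulVec_smul, smul_dotProduct, dotProduct_smul,
            smul_eq_mul, smul_eq_mul]; ring
        rw [h1]
        have := dotSelf_nonneg (F₂.mulVec g₁)
        nlinarith
      exact max_le_max hP1 hP2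
  obtain ⟨p, hp⟩ := hne
  obtain ⟨p', hp', hle⟩ := key p hp
  refine ⟨⟨p', hp'⟩, ?_⟩
  refine le_csInf ⟨p, hp⟩ fun q hq => ?_
  obtain ⟨q', hq', hle'⟩ := key q hq
  exact le_trans (csInf_le hbdd hq') hle' 

end
end

section
/- Let N ≥ 1, α ∈ [0,1], and σ₁, σ₂ ∈ ℝ. Let F₁ ∈ ℝ^{N×N} be strictly lower triangular and let F₂ ∈ ℝ^{N×N} be of subdiagonal form whose entry in the last row is zero (f_{2,N} = 0). Then the last standard basis vector e_N is an eigenvector of B with eigenvalue (1−α)σ₂², i.e., B·e_N = (1−α)σ₂²·e_N. In particular, the smallest eigenvalue of the symmetric matrix B is at most (1−α)σ₂². -/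
open Matrix

noncomputable section

/-- A matrix is of subdiagonal form: only entries immediately below the
diagonal may be nonzero. -/
def Subdiag {N : ℕ} (A : Matrix (Fin N) (Fin N) ℝ) : Prop :=
  ∀ i j : Fin N, (i : ℕ) ≠ (j : ℕ) + 1 → A i j = 0

/-- `B = α·Qs F₁ᵀF₁ Qs + (1−α)·Qs (I + F₂F₁)ᵀ(I + F₂F₁) Qs`. -/
def Bmat {N : ℕ} (α : ℝ) (F₁ F₂ Qs : Matrix (Fin N) (Fin N) ℝ) :
    Matrix (Fin N) (Fin N) ℝ :=
  α • (Qs * F₁ᵀ * F₁ * Qs)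
    + (1 - α) • (Qs * (1 + F₂ * F₁)ᵀ * (1 + F₂ * F₁) * Qs)

/-!
Write `e` for the last standard basis vector. Strict lower triangularity of `F₁` kills its last
column, so `F₁ e = 0`, and the zero last row of `F₂` gives `F₂ᵀ e = 0`. Hence `Q₂ e = σ₂² e`, and
since `Qs` is a positive semidefinite square root of `Q₂`, `Qs e = |σ₂| e`. Feeding this through
the definition of `B` leaves only `(1 - α) |σ₂|² e`; a real eigenvector of the symmetric matrix
`B` exhibits its eigenvalue among `hB.eigenvalues`.
-/

namespace Matrix

variable {n : Type*} [Fintype n]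

theorem PosSemidef.mulVec_eq_smul_of_mulVec_mulVec_eq_sq_smul {A : Matrix n n ℝ}
    (hA : A.PosSemidef) {v : n → ℝ} {μ : ℝ} (hμ : 0 ≤ μ)
    (h : A *ᵥ (A *ᵥ v) = μ ^ 2 • v) : A *ᵥ v = μ • v := by
  rcases hμ.eq_or_lt with rfl | hμ
  · have hAA : (Aᴴ * A) *ᵥ v = 0 := by
      rw [hA.isHermitian.eq, ← mulVec_mulVec, h, zero_pow two_ne_zero, zero_smul]
    rw [zero_smul, ← conjTranspose_mul_self_mulVec_eq_zero, hAA]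
  · set u := A *ᵥ v - μ • v
    -- `(A + μ) u = A²v - μ²v = 0`, so `u` lies in the `-μ`-eigenspace of the PSD matrix `A`.
    have hAu : A *ᵥ u = -μ • u := by
      simp only [u, mulVec_sub, mulVec_smul, h, smul_sub, smul_smul]
      module
    have hnonneg : 0 ≤ u ⬝ᵥ A *ᵥ u := by simpa using hA.dotProduct_mulVec_nonneg u
    have huu : 0 ≤ u ⬝ᵥ u := by simpa using dotProduct_star_self_nonneg u
    rw [hAu, dotProduct_smul, smul_eq_mul] at hnonneg
    have hu : u = 0 := dotProduct_self_eq_zero.mp (by nlinarith)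
    exact sub_eq_zero.mp hu

theorem IsHermitian.exists_eigenvalues_eq_of_mulVec_eq_smul [DecidableEq n]
    {A : Matrix n n ℝ} (hA : A.IsHermitian) {v : n → ℝ} (hv : v ≠ 0) {c : ℝ}
    (h : A *ᵥ v = c • v) : ∃ i, hA.eigenvalues i = c := by
  have hc : Module.End.HasEigenvector (toLin' A) c v :=
    Module.End.hasEigenvector_iff.mpr ⟨Module.End.mem_eigenspace_iff.mpr h, hv⟩
  have := (Module.End.hasEigenvalue_of_hasEigenvector hc).mem_spectrum
  rwa [spectrum_toLin', hA.spectrum_real_eq_range_eigenvalues] at this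

end Matrix

theorem Slt.mulVec_single_eq_zero {N : ℕ} {F : Matrix (Fin N) (Fin N) ℝ} (hF : Slt F)
    {j : Fin N} (hj : IsTop j) : F *ᵥ Pi.single j 1 = 0 := by
  ext i
  simp [mulVec_single, hF i j (hj i)]

theorem Q2_mulVec_of_transpose_mulVec_eq_zero {N : ℕ} (σ₁ σ₂ : ℝ)
    {F₂ : Matrix (Fin N) (Fin N) ℝ} {v : Fin N → ℝ} (h : F₂ᵀ *ᵥ v = 0) :
    Q2 σ₁ σ₂ F₂ *ᵥ v = σ₂ ^ 2 • v := by
  rw [Q2, add_mulVec, smul_mulVec, smul_mulVec, ← mulVec_mulVec, h, mulVec_zero,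
    one_mulVec, smul_zero, zero_add]

theorem Bmat_mulVec_of_mulVec_eq {N : ℕ} (α : ℝ) {F₁ F₂ Qs : Matrix (Fin N) (Fin N) ℝ}
    {v : Fin N → ℝ} {s : ℝ} (h₁ : F₁ *ᵥ v = 0) (h₂ : F₂ᵀ *ᵥ v = 0)
    (hQs : Qs *ᵥ v = s • v) : Bmat α F₁ F₂ Qs *ᵥ v = ((1 - α) * s ^ 2) • v := by
  have hM : (1 + F₂ * F₁) *ᵥ v = v := by
    rw [add_mulVec, one_mulVec, ← mulVec_mulVec, h₁, mulVec_zero, add_zero]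
  have hMT : (1 + F₂ * F₁)ᵀ *ᵥ v = v := by
    rw [transpose_add, transpose_one, transpose_mul, add_mulVec, one_mulVec,
      ← mulVec_mulVec, h₂, mulVec_zero, add_zero]
  simp only [Bmat, add_mulVec, smul_mulVec, ← mulVec_mulVec, hQs, mulVec_smul, h₁, hM, hMT,
    mulVec_zero, smul_zero, zero_add, smul_smul]
  ring_nf

/-- If the last-row entry of the subdiagonal matrix `F₂` is
zero, then the last standard basis vector is an eigenvector of `B` with
eigenvalue `(1−α)σ₂²`; in particular the smallest eigenvalue of the symmetric
matrix `B` is at most `(1−α)σ₂²`. -/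
theorem Bmat_last_basis_eigenvector {N : ℕ} (hN : 1 ≤ N)
    (α : ℝ) (σ₁ σ₂ : ℝ)
    (F₁ F₂ : Matrix (Fin N) (Fin N) ℝ) (hF₁ : Slt F₁)
    (hlast : ∀ j : Fin N, F₂ ⟨N - 1, by omega⟩ j = 0)
    (Qs : Matrix (Fin N) (Fin N) ℝ) (hQs : Qs.PosSemidef)
    (hQsq : Qs * Qs = Q2 σ₁ σ₂ F₂) :
    (Bmat α F₁ F₂ Qs).mulVec (Pi.single (⟨N - 1, by omega⟩ : Fin N) 1 : Fin N → ℝ)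
        = ((1 - α) * σ₂ ^ 2) • (Pi.single (⟨N - 1, by omega⟩ : Fin N) 1 : Fin N → ℝ)
    ∧ ∀ hB : (Bmat α F₁ F₂ Qs).IsHermitian,
        ∃ i : Fin N, hB.eigenvalues i ≤ (1 - α) * σ₂ ^ 2 := by
  set e : Fin N → ℝ := Pi.single ⟨N - 1, by omega⟩ 1
  have hF₁e : F₁ *ᵥ e = 0 :=
    hF₁.mulVec_single_eq_zero fun i ↦ Fin.le_def.mpr (Nat.le_sub_one_of_lt i.isLt)
  have hF₂e : F₂ᵀ *ᵥ e = 0 := by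
    ext i
    simp [e, mulVec_single, hlast i]
  have hQse : Qs *ᵥ e = |σ₂| • e :=
    hQs.mulVec_eq_smul_of_mulVec_mulVec_eq_sq_smul (abs_nonneg σ₂) <| by
      rw [mulVec_mulVec, hQsq, Q2_mulVec_of_transpose_mulVec_eq_zero σ₁ σ₂ hF₂e, sq_abs]
  have hBe : Bmat α F₁ F₂ Qs *ᵥ e = ((1 - α) * σ₂ ^ 2) • e := by
    rw [Bmat_mulVec_of_mulVec_eq α hF₁e hF₂e hQse, sq_abs]
  refine ⟨hBe, fun hB ↦ ?_⟩
  obtain ⟨i, hi⟩ := hB.exists_eigenvalues_eq_of_mulVec_eq_smul (by simp [e]) hBe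
  exact ⟨i, hi.le⟩

end
end

section
/- Let N = 3, α ∈ [0,1], and σ₁, σ₂ ∈ ℝ. Let F₁ ∈ ℝ^{3×3} be strictly lower triangular and let F₂ ∈ ℝ^{3×3} have all entries zero except possibly the (2,1) entry (i.e., F₂ is of subdiagonal form with f_{2,3} = 0). Then xᵀBx ≥ (1−α)σ₂²‖x‖² for all x ∈ ℝ³, i.e., B − (1−α)σ₂²·I is positive semidefinite; moreover B·e₃ = (1−α)σ₂²·e₃, so the smallest eigenvalue of B equals exactly (1−α)σ₂². -/
open Matrix

noncomputable section

/-!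
The first row of `F₁` and all columns of `F₂` but the first vanish, so `F₂F₁ = 0` and
`B = α (F₁Qs)ᵀ(F₁Qs) + (1−α) Qs² = α (F₁Qs)ᵀ(F₁Qs) + (1−α)σ₁² F₂F₂ᵀ + (1−α)σ₂² I`.
Hence `B − (1−α)σ₂² I` is a nonnegative combination of Gram matrices. The last basis vector `e₃`
is killed by `F₁` and by `F₂ᵀ`, so `Qs² e₃ = σ₂² e₃`; as `Qs` is positive semidefinite this forces
`Qs e₃ = |σ₂| e₃`, whence `F₁ Qs e₃ = 0` and `B e₃ = (1−α)σ₂² e₃`. A lower bound on the Rayleigh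
quotient that is attained by an eigenvector is the smallest eigenvalue.
-/

namespace Matrix

variable {n : Type*} [Fintype n]

theorem mul_eq_zero_of_col_ne_eq_zero_of_row_eq_zero {R : Type*} [NonUnitalNonAssocSemiring R]
    {A B : Matrix n n R} (j₀ : n) (hA : ∀ i j, j ≠ j₀ → A i j = 0) (hB : ∀ j, B j₀ j = 0) :
    A * B = 0 := by
  ext i j
  refine Finset.sum_eq_zero fun k _ => ?_
  by_cases hk : k = j₀
  · simp [hk, hB]
  · simp [hA i k hk]

theorem PosSemidef.le_dotProduct_mulVec [DecidableEq n] {A : Matrix n n ℝ} {c : ℝ}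
    (hA : (A - c • 1).PosSemidef) (x : n → ℝ) : c * (x ⬝ᵥ x) ≤ x ⬝ᵥ A *ᵥ x := by
  have := hA.dotProduct_mulVec_nonneg x
  rw [star_trivial, sub_mulVec, smul_mulVec, one_mulVec, dotProduct_sub, dotProduct_smul,
    smul_eq_mul] at this
  linarith

theorem PosSemidef.mulVec_eq_of_mul_self_mulVec {Q : Matrix n n ℝ} (hQ : Q.PosSemidef) {s : ℝ}
    (hs : 0 ≤ s) {v : n → ℝ} (hv : (Q * Q) *ᵥ v = s ^ 2 • v) : Q *ᵥ v = s • v := by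
  obtain ⟨u, hu⟩ : ∃ u, u = Q *ᵥ v - s • v := ⟨_, rfl⟩
  -- `u` lies in the kernel of `Q + s`, on which the quadratic form of `Q` is `-s ‖u‖² ≤ 0`.
  have hQu : Q *ᵥ u = -s • u := by
    simp only [hu, mulVec_sub, mulVec_smul, mulVec_mulVec, hv]
    module
  have hQu0 : Q *ᵥ u = 0 := by
    rw [← hQ.dotProduct_mulVec_zero_iff]
    have h₁ := hQ.dotProduct_mulVec_nonneg u
    have h₂ : 0 ≤ u ⬝ᵥ u := Finset.sum_nonneg fun _ _ => mul_self_nonneg _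
    rw [star_trivial, hQu, dotProduct_smul, smul_eq_mul] at h₁ ⊢
    nlinarith
  have hsu : s • u = 0 := by rwa [hQu, neg_smul, neg_eq_zero] at hQu0
  have hQt : Qᵀ = Q := hQ.1
  have huu : u ⬝ᵥ u = 0 :=
    calc u ⬝ᵥ u = u ⬝ᵥ Q *ᵥ v - (s • u) ⬝ᵥ v := by
          nth_rw 2 [hu]
          rw [dotProduct_sub, dotProduct_smul, smul_dotProduct, dotProduct_comm u v]
      _ = (Q *ᵥ u) ⬝ᵥ v - (s • u) ⬝ᵥ v := by rw [dotProduct_mulVec, ← mulVec_transpose, hQt]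
      _ = 0 := by rw [hQu0, hsu, zero_dotProduct, sub_zero]
  rw [← sub_eq_zero, ← hu]
  exact dotProduct_self_eq_zero.1 huu

theorem IsHermitian.iInf_eigenvalues_eq [DecidableEq n] {A : Matrix n n ℝ} (hA : A.IsHermitian)
    {c : ℝ} (hle : ∀ x, c * (x ⬝ᵥ x) ≤ x ⬝ᵥ A *ᵥ x) {v : n → ℝ} (hv : v ≠ 0)
    (hAv : A *ᵥ v = c • v) : ⨅ i, hA.eigenvalues i = c := by
  obtain ⟨i₀, hi₀⟩ : c ∈ Set.range hA.eigenvalues := by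
    rw [← hA.spectrum_real_eq_range_eigenvalues, ← spectrum_toLin']
    exact Module.End.hasEigenvalue_of_hasEigenvector
      (Module.End.hasEigenvector_iff.2 ⟨Module.End.mem_eigenspace_iff.2 hAv, hv⟩) |>.mem_spectrum
  have : Nonempty n := ⟨i₀⟩
  refine le_antisymm ((ciInf_le (Set.finite_range _).bddBelow i₀).trans_eq hi₀)
    (le_ciInf fun i => ?_)
  set w := hA.eigenvectorBasis i
  have hw : inner ℝ w w = 1 := by
    rw [real_inner_self_eq_norm_sq, hA.eigenvectorBasis.orthonormal.1 i, one_pow]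
  rw [EuclideanSpace.inner_eq_star_dotProduct, star_trivial] at hw
  simpa [hA.eigenvalues_eq, hw] using hle w.ofLp

end Matrix

section

variable {N : ℕ} {α σ₁ σ₂ : ℝ} {F₁ F₂ Qs : Matrix (Fin N) (Fin N) ℝ}

theorem Bmat_eq_of_mul_eq_zero (hF : F₂ * F₁ = 0) (hQs : Qs.IsHermitian) :
    Bmat α F₁ F₂ Qs = α • ((F₁ * Qs)ᵀ * (F₁ * Qs)) + (1 - α) • (Qs * Qs) := by
  rw [Bmat, hF, add_zero, transpose_one, transpose_mul, show Qsᵀ = Qs from hQs]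
  simp only [Matrix.mul_one, Matrix.mul_assoc]

theorem Bmat_sub_smul_one_posSemidef (hα : α ∈ Set.Icc (0 : ℝ) 1) (hF : F₂ * F₁ = 0)
    (hQs : Qs.PosSemidef) (hQsq : Qs * Qs = σ₁ ^ 2 • (F₂ * F₂ᵀ) + σ₂ ^ 2 • 1) :
    (Bmat α F₁ F₂ Qs - ((1 - α) * σ₂ ^ 2) • 1).PosSemidef := by
  have hB : Bmat α F₁ F₂ Qs - ((1 - α) * σ₂ ^ 2) • 1
      = α • ((F₁ * Qs)ᵀ * (F₁ * Qs)) + ((1 - α) * σ₁ ^ 2) • (F₂ * F₂ᵀ) := by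
    rw [Bmat_eq_of_mul_eq_zero hF hQs.1, hQsq]
    module
  rw [hB]
  exact ((posSemidef_conjTranspose_mul_self _).smul hα.1).add
    ((posSemidef_self_mul_conjTranspose _).smul (mul_nonneg (sub_nonneg.2 hα.2) (sq_nonneg _)))

theorem Bmat_mulVec_of_mulVec_eq_zero (hF : F₂ * F₁ = 0) (hQs : Qs.PosSemidef)
    (hQsq : Qs * Qs = σ₁ ^ 2 • (F₂ * F₂ᵀ) + σ₂ ^ 2 • 1) {v : Fin N → ℝ}
    (hF₁v : F₁ *ᵥ v = 0) (hF₂v : F₂ᵀ *ᵥ v = 0) :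
    Bmat α F₁ F₂ Qs *ᵥ v = ((1 - α) * σ₂ ^ 2) • v := by
  have hQQv : (Qs * Qs) *ᵥ v = |σ₂| ^ 2 • v := by
    rw [hQsq, add_mulVec, smul_mulVec, smul_mulVec, ← mulVec_mulVec, hF₂v, one_mulVec, sq_abs]
    simp
  have hQv := hQs.mulVec_eq_of_mul_self_mulVec (abs_nonneg σ₂) hQQv
  rw [Bmat_eq_of_mul_eq_zero hF hQs.1, add_mulVec, smul_mulVec, smul_mulVec, hQQv,
    ← mulVec_mulVec, ← mulVec_mulVec, hQv, mulVec_smul, hF₁v]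
  simp [sq_abs, smul_smul]

end

/-- (Conjecture 1 for `N = 3`.) For strictly lower triangular
`F₁` and `F₂` nonzero at most in the `(2,1)` entry, `xᵀBx ≥ (1−α)σ₂²‖x‖²` for
all `x`, `B e₃ = (1−α)σ₂² e₃`, and the smallest eigenvalue of `B` equals
exactly `(1−α)σ₂²`. -/
theorem Bmat_min_eigenvalue_N3 (α : ℝ) (hα : α ∈ Set.Icc (0 : ℝ) 1) (σ₁ σ₂ : ℝ)
    (F₁ F₂ : Matrix (Fin 3) (Fin 3) ℝ)
    (hF₁ : ∀ i j : Fin 3, i ≤ j → F₁ i j = 0)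
    (hF₂ : ∀ i j : Fin 3, ¬(i = 1 ∧ j = 0) → F₂ i j = 0)
    (Qs : Matrix (Fin 3) (Fin 3) ℝ) (hQs : Qs.PosSemidef)
    (hQsq : Qs * Qs = σ₁ ^ 2 • (F₂ * F₂ᵀ) + σ₂ ^ 2 • (1 : Matrix (Fin 3) (Fin 3) ℝ)) :
    (∀ x : Fin 3 → ℝ,
      x ⬝ᵥ (Bmat α F₁ F₂ Qs).mulVec x ≥ (1 - α) * σ₂ ^ 2 * (x ⬝ᵥ x))
    ∧ (Bmat α F₁ F₂ Qs).mulVec (Pi.single (2 : Fin 3) 1 : Fin 3 → ℝ)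
        = ((1 - α) * σ₂ ^ 2) • (Pi.single (2 : Fin 3) 1 : Fin 3 → ℝ)
    ∧ ∀ hB : (Bmat α F₁ F₂ Qs).IsHermitian,
        (⨅ i : Fin 3, hB.eigenvalues i) = (1 - α) * σ₂ ^ 2 := by
  have hF : F₂ * F₁ = 0 :=
    mul_eq_zero_of_col_ne_eq_zero_of_row_eq_zero 0 (fun i j hj => hF₂ i j fun h => hj h.2)
      fun j => hF₁ 0 j (Fin.zero_le j)
  have hF₁e : F₁ *ᵥ Pi.single 2 1 = 0 := by
    ext i
    simp [hF₁ i 2 (Fin.le_last i)]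
  have hF₂e : F₂ᵀ *ᵥ Pi.single 2 1 = 0 := by
    ext i
    simp [hF₂ 2 i (by simp)]
  have hBc := Bmat_sub_smul_one_posSemidef hα hF hQs hQsq
  have hBe := Bmat_mulVec_of_mulVec_eq_zero (α := α) hF hQs hQsq hF₁e hF₂e
  exact ⟨hBc.le_dotProduct_mulVec, hBe, fun hB =>
    hB.iInf_eigenvalues_eq hBc.le_dotProduct_mulVec (Pi.single_eq_zero_iff.not.2 one_ne_zero) hBe⟩

end
end

section
/- Let N = 3, σ₁ ∈ ℝ, σ₂ > 0, α ∈ [0,1], and η₂ > 0. Let F₁ ∈ ℝ^{3×3} be strictly lower triangular and let F₂ ∈ ℝ^{3×3} have all entries zero except possibly the (2,1) entry. Define g₂* := (0, 0, √η₂·σ₂)ᵀ ∈ ℝ³. Then g₂*ᵀQ₂⁻¹g₂* = η₂, the objective value α‖F₁g₂*‖² + (1−α)‖(I + F₂F₁)g₂*‖² equals (1−α)σ₂²η₂, and for every g₂ ∈ ℝ³ with g₂ᵀQ₂⁻¹g₂ = η₂ one has α‖F₁g₂*‖² + (1−α)‖(I + F₂F₁)g₂*‖² ≤ α‖F₁g₂‖²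 + (1−α)‖(I + F₂F₁)g₂‖². In words: for N = 3 it is optimal for User 2 to transmit its message only over the last channel use. -/
open Matrix

/-- (Proposition 3 for `N = 3`.) It is optimal for User 2 to
transmit its message only over the last channel use: `g₂* = (0,0,√η₂·σ₂)ᵀ`
satisfies the SNR constraint, achieves objective value `(1−α)σ₂²η₂`, and
minimizes the objective among all `g₂` satisfying the SNR constraint. -/
theorem g2_last_channel_use_optimal_N3 (σ₁ σ₂ : ℝ) (hσ₂ : 0 < σ₂)
    (α : ℝ) (hα : α ∈ Set.Icc (0 : ℝ) 1) (η₂ : ℝ) (hη₂ : 0 < η₂)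
    (F₁ F₂ : Matrix (Fin 3) (Fin 3) ℝ)
    (hF₁ : ∀ i j : Fin 3, i ≤ j → F₁ i j = 0)
    (hF₂ : ∀ i j : Fin 3, ¬(i = 1 ∧ j = 0) → F₂ i j = 0) :
    let Q₂ : Matrix (Fin 3) (Fin 3) ℝ :=
      σ₁ ^ 2 • (F₂ * F₂ᵀ) + σ₂ ^ 2 • (1 : Matrix (Fin 3) (Fin 3) ℝ)
    let gstar : Fin 3 → ℝ := ![0, 0, Real.sqrt η₂ * σ₂]
    gstar ⬝ᵥ Q₂⁻¹.mulVec gstar = η₂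
    ∧ α * ((F₁.mulVec gstar) ⬝ᵥ (F₁.mulVec gstar))
        + (1 - α) * (((1 + F₂ * F₁).mulVec gstar) ⬝ᵥ ((1 + F₂ * F₁).mulVec gstar))
        = (1 - α) * σ₂ ^ 2 * η₂
    ∧ ∀ g₂ : Fin 3 → ℝ, g₂ ⬝ᵥ Q₂⁻¹.mulVec g₂ = η₂ →
        α * ((F₁.mulVec gstar) ⬝ᵥ (F₁.mulVec gstar))
          + (1 - α) * (((1 + F₂ * F₁).mulVec gstar) ⬝ᵥ ((1 + F₂ * F₁).mulVec gstar))
        ≤ α * ((F₁.mulVec g₂) ⬝ᵥ (F₁.mulVec g₂))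
          + (1 - α) * (((1 + F₂ * F₁).mulVec g₂) ⬝ᵥ ((1 + F₂ * F₁).mulVec g₂)) := by
  intro Q₂ gstar
  obtain ⟨hα0, hα1⟩ := hα
  set a : ℝ := F₂ 1 0 with ha
  have hσ₂2 : (0:ℝ) < σ₂ ^ 2 := by positivity
  have hd1 : (0:ℝ) < σ₁ ^ 2 * a ^ 2 + σ₂ ^ 2 := by positivity
  -- Q₂ is diagonal
  have hQ : Q₂ = Matrix.diagonal ![σ₂ ^ 2, σ₁ ^ 2 * a ^ 2 + σ₂ ^ 2, σ₂ ^ 2] := by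
    ext i j
    fin_cases i <;> fin_cases j <;>
      simp [Q₂, Matrix.mul_apply, Fin.sum_univ_three, Matrix.one_apply, hF₂, ha] <;>
      (first | (left; ring) | ring)
  have hQinv : Q₂⁻¹ = Matrix.diagonal ![(σ₂ ^ 2)⁻¹, (σ₁ ^ 2 * a ^ 2 + σ₂ ^ 2)⁻¹, (σ₂ ^ 2)⁻¹] := by
    apply Matrix.inv_eq_right_inv
    rw [hQ, Matrix.diagonal_mul_diagonal]
    ext i j
    fin_cases i <;> fin_cases j <;>
      simp [Matrix.diagonal_apply, Matrix.one_apply] <;> field_simp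
  -- F₁ annihilates gstar
  have hF₁g : F₁.mulVec gstar = 0 := by
    ext i
    have h2 : F₁ i 2 = 0 := hF₁ i 2 (by fin_cases i <;> decide)
    simp [Matrix.mulVec, dotProduct, Fin.sum_univ_three, gstar, h2]
  -- F₂ * F₁ = 0
  have hF₂F₁ : F₂ * F₁ = 0 := by
    ext i j
    have h0 : F₁ 0 j = 0 := hF₁ 0 j (Fin.zero_le j)
    fin_cases i <;>
      simp [Matrix.mul_apply, Fin.sum_univ_three, hF₂, h0]
  have hIg : (1 + F₂ * F₁).mulVec gstar = gstar := by
    rw [hF₂F₁, add_zero, Matrix.one_mulVec]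
  have hsq : Real.sqrt η₂ ^ 2 = η₂ := Real.sq_sqrt hη₂.le
  have hg2 : gstar ⬝ᵥ gstar = η₂ * σ₂ ^ 2 := by
    simp [gstar, dotProduct, Fin.sum_univ_three]
    nlinarith [hsq]
  refine ⟨?_, ?_, ?_⟩
  · rw [hQinv]
    simp [Matrix.mulVec_diagonal, dotProduct, Fin.sum_univ_three, gstar]
    field_simp
    nlinarith [hsq]
  · rw [hF₁g, hIg, hg2]
    simp
    ring
  · intro g hg
    rw [hF₁g, hIg, hg2]
    simp only [dotProduct_zero, mul_zero, zero_add]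
    rw [hF₂F₁, add_zero, Matrix.one_mulVec]
    rw [hQinv] at hg
    simp [Matrix.mulVec_diagonal, dotProduct, Fin.sum_univ_three] at hg
    have hle : σ₂ ^ 2 * (σ₁ ^ 2 * a ^ 2 + σ₂ ^ 2)⁻¹ ≤ 1 := by
      have h := (div_le_one hd1).mpr (by nlinarith : σ₂ ^ 2 ≤ σ₁ ^ 2 * a ^ 2 + σ₂ ^ 2)
      rwa [div_eq_mul_inv] at h
    have key : σ₂ ^ 2 * η₂ ≤ g ⬝ᵥ g := by
      have hcalc : σ₂ ^ 2 * η₂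
          = g 0 * g 0 + σ₂ ^ 2 * (σ₁ ^ 2 * a ^ 2 + σ₂ ^ 2)⁻¹ * (g 1 * g 1) + g 2 * g 2 := by
        rw [← hg]
        field_simp
      have hb : σ₂ ^ 2 * (σ₁ ^ 2 * a ^ 2 + σ₂ ^ 2)⁻¹ * (g 1 * g 1) ≤ g 1 * g 1 := by
        nlinarith [mul_self_nonneg (g 1)]
      have hgg : g ⬝ᵥ g = g 0 * g 0 + g 1 * g 1 + g 2 * g 2 := by
        simp [dotProduct, Fin.sum_univ_three]
      rw [hcalc, hgg]
      linarith
    have hFnn : 0 ≤ (F₁.mulVec g) ⬝ᵥ (F₁.mulVec g) := by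
      simp only [dotProduct, Fin.sum_univ_three]
      have := mul_self_nonneg (F₁.mulVec g 0)
      have := mul_self_nonneg (F₁.mulVec g 1)
      have := mul_self_nonneg (F₁.mulVec g 2)
      linarith
    have h1α : (0:ℝ) ≤ 1 - α := by linarith
    have step1 : (1 - α) * (η₂ * σ₂ ^ 2) ≤ (1 - α) * (g ⬝ᵥ g) := by
      apply mul_le_mul_of_nonneg_left _ h1α
      linarith [key]
    have step2 : 0 ≤ α * ((F₁.mulVec g) ⬝ᵥ (F₁.mulVec g)) := mul_nonneg hα0 hFnn
    linarith
end

section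
/- Fix N ≥ 1, σ₁ ≠ 0, σ₂ ∈ ℝ, and let F₁, F₂ ∈ ℝ^{N×N} be strictly lower triangular, g₁, g₂ ∈ ℝ^N with g₁ ≠ 0, and b, b' ∈ ℝ. Suppose P₁(g₁,F₁,g₂,F₂) ≤ b, P₂(g₁,F₁,g₂,F₂) ≤ b, and b' > b. Then there exists c > 1 such that P₁(c·g₁, F₁, g₂, F₂) ≤ b', P₂(c·g₁, F₁, g₂, F₂) ≤ b', and (c·g₁)ᵀQ₁⁻¹(c·g₁) > g₁ᵀQ₁⁻¹g₁. In words: strictly enlarging the power budget allows a feasible encoding with strictly larger SNR₁ while keeping everything else fixed, so the minimum sum-error is decreasing in the power budget. -/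
open Matrix

noncomputable section

open Filter Topology

/-!
Scaling `g₁` by `c` changes `P₁` and `P₂` by `(c² - 1)` times a fixed nonnegative quantity, so
both stay below `b' > b` for all `c` close enough to `1`. Meanwhile `SNR₁` is multiplied by `c²`,
and it is positive because `Q₁` is positive definite: `I + F₁F₂` is unipotent lower triangular,
hence invertible, so `σ₁²(I + F₁F₂)(I + F₁F₂)ᵀ` is positive definite.
-/

namespace Slt

variable {N : ℕ} {A B : Matrix (Fin N) (Fin N) ℝ}

lemma mul (hA : Slt A) (hB : Slt B) : Slt (A * B) := by
  intro i j hij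
  rw [mul_apply]
  refine Finset.sum_eq_zero fun k _ => ?_
  rcases le_or_gt i k with hik | hki
  · rw [hA i k hik, zero_mul]
  · rw [hB k j (hki.trans_le hij).le, mul_zero]

lemma det_one_add (hA : Slt A) : (1 + A).det = 1 := by
  have hlower : (1 + A).IsLowerTriangular := fun i j hji => by
    have hij : i < j := hji
    simp [one_apply_ne hij.ne, hA i j hij.le]
  rw [det_of_isLowerTriangular _ hlower]
  simp [hA _ _ le_rfl]

end Slt

lemma posDef_Q1 {N : ℕ} {σ₁ : ℝ} (σ₂ : ℝ) (hσ₁ : σ₁ ≠ 0)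
    {F₁ F₂ : Matrix (Fin N) (Fin N) ℝ} (hF₁ : Slt F₁) (hF₂ : Slt F₂) :
    (Q1 σ₁ σ₂ F₁ F₂).PosDef := by
  have hunit : IsUnit (1 + F₁ * F₂) := by
    rw [isUnit_iff_isUnit_det, (hF₁.mul hF₂).det_one_add]
    exact isUnit_one
  have hmain : ((1 + F₁ * F₂) * (1 + F₁ * F₂)ᴴ).PosDef :=
    .mul_conjTranspose_self _ (vecMul_injective_iff_isUnit.2 hunit)
  have hnoise : (F₁ * F₁ᴴ).PosSemidef := posSemidef_self_mul_conjTranspose F₁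
  simpa [Q1] using (hmain.smul (by positivity : 0 < σ₁ ^ 2)).add_posSemidef
    (hnoise.smul (sq_nonneg σ₂))

lemma smul_dotProduct_mulVec_smul {n R : Type*} [Fintype n] [CommSemiring R]
    (c : R) (x : n → R) (A : Matrix n n R) :
    (c • x) ⬝ᵥ A *ᵥ (c • x) = c ^ 2 * (x ⬝ᵥ A *ᵥ x) := by
  rw [mulVec_smul, smul_dotProduct, dotProduct_smul, smul_eq_mul, smul_eq_mul]
  ring

section Powers

variable {N : ℕ} (σ₁ σ₂ : ℝ) (g₁ g₂ : Fin N → ℝ) (F₁ F₂ : Matrix (Fin N) (Fin N) ℝ) (c : ℝ)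

lemma P1_smul_g₁ :
    P1 σ₁ σ₂ (c • g₁) F₁ g₂ F₂ = P1 σ₁ σ₂ g₁ F₁ g₂ F₂ + (c ^ 2 - 1) * (g₁ ⬝ᵥ g₁) := by
  simp only [P1, smul_dotProduct, dotProduct_smul, smul_eq_mul]
  ring

lemma P2_smul_g₁ :
    P2 σ₁ σ₂ (c • g₁) F₁ g₂ F₂
      = P2 σ₁ σ₂ g₁ F₁ g₂ F₂ + (c ^ 2 - 1) * (F₂ *ᵥ g₁ ⬝ᵥ F₂ *ᵥ g₁) := by
  simp only [P2, mulVec_smul, smul_dotProduct, dotProduct_smul, smul_eq_mul]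
  ring

end Powers

lemma eventually_add_sq_sub_one_mul_lt {p q : ℝ} (h : p < q) (t : ℝ) :
    ∀ᶠ c in 𝓝 (1 : ℝ), p + (c ^ 2 - 1) * t < q := by
  have hcont : Continuous fun c : ℝ => p + (c ^ 2 - 1) * t := by fun_prop
  exact (hcont.tendsto 1).eventually_lt_const (by simpa using h)

theorem larger_budget_strictly_larger_snr_general {N : ℕ}
    (σ₁ σ₂ : ℝ) (hσ₁ : σ₁ ≠ 0)
    (F₁ F₂ : Matrix (Fin N) (Fin N) ℝ) (hF₁ : Slt F₁) (hF₂ : Slt F₂)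
    (g₁ g₂ : Fin N → ℝ) (hg₁ : g₁ ≠ 0) (b b' : ℝ)
    (hP1 : P1 σ₁ σ₂ g₁ F₁ g₂ F₂ ≤ b) (hP2 : P2 σ₁ σ₂ g₁ F₁ g₂ F₂ ≤ b)
    (hb : b < b') :
    ∃ c : ℝ, 1 < c
      ∧ P1 σ₁ σ₂ (c • g₁) F₁ g₂ F₂ ≤ b'
      ∧ P2 σ₁ σ₂ (c • g₁) F₁ g₂ F₂ ≤ b'
      ∧ g₁ ⬝ᵥ (Q1 σ₁ σ₂ F₁ F₂)⁻¹.mulVec g₁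
          < (c • g₁) ⬝ᵥ (Q1 σ₁ σ₂ F₁ F₂)⁻¹.mulVec (c • g₁) := by
  have hsnr : 0 < g₁ ⬝ᵥ (Q1 σ₁ σ₂ F₁ F₂)⁻¹ *ᵥ g₁ := by
    simpa using (posDef_Q1 σ₂ hσ₁ hF₁ hF₂).inv.dotProduct_mulVec_pos hg₁
  have hfeasible : ∀ᶠ c in 𝓝 (1 : ℝ),
      P1 σ₁ σ₂ (c • g₁) F₁ g₂ F₂ < b' ∧ P2 σ₁ σ₂ (c • g₁) F₁ g₂ F₂ < b' := by
    simp only [P1_smul_g₁, P2_smul_g₁]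
    exact (eventually_add_sq_sub_one_mul_lt (hP1.trans_lt hb) _).and
      (eventually_add_sq_sub_one_mul_lt (hP2.trans_lt hb) _)
  obtain ⟨c, ⟨hP1c, hP2c⟩, hc⟩ :=
    ((hfeasible.filter_mono nhdsWithin_le_nhds).and self_mem_nhdsWithin).exists (f := 𝓝[>] 1)
  refine ⟨c, hc, hP1c.le, hP2c.le, ?_⟩
  rw [smul_dotProduct_mulVec_smul]
  exact lt_mul_left hsnr (one_lt_pow₀ hc two_ne_zero)

/-- Strictly enlarging the power budget allows a feasible
encoding with strictly larger `SNR₁`, scaling only `g₁` by some `c > 1`. -/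
theorem larger_budget_strictly_larger_snr {N : ℕ} (hN : 1 ≤ N)
    (σ₁ σ₂ : ℝ) (hσ₁ : σ₁ ≠ 0)
    (F₁ F₂ : Matrix (Fin N) (Fin N) ℝ) (hF₁ : Slt F₁) (hF₂ : Slt F₂)
    (g₁ g₂ : Fin N → ℝ) (hg₁ : g₁ ≠ 0) (b b' : ℝ)
    (hP1 : P1 σ₁ σ₂ g₁ F₁ g₂ F₂ ≤ b) (hP2 : P2 σ₁ σ₂ g₁ F₁ g₂ F₂ ≤ b)
    (hb : b < b') :
    ∃ c : ℝ, 1 < c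
      ∧ P1 σ₁ σ₂ (c • g₁) F₁ g₂ F₂ ≤ b'
      ∧ P2 σ₁ σ₂ (c • g₁) F₁ g₂ F₂ ≤ b'
      ∧ g₁ ⬝ᵥ (Q1 σ₁ σ₂ F₁ F₂)⁻¹.mulVec g₁
          < (c • g₁) ⬝ᵥ (Q1 σ₁ σ₂ F₁ F₂)⁻¹.mulVec (c • g₁) :=
  larger_budget_strictly_larger_snr_general σ₁ σ₂ hσ₁ F₁ F₂ hF₁ hF₂ g₁ g₂ hg₁ b b' hP1 hP2 hb

end
end

section
/- Let d ≥ 0, h ∈ ℝ^d, and q, c, σ₁, σ₂ ∈ ℝ with c²σ₁² + σ₂² > 0. Define Φ(f) := σ₁²(q + c·⟨h,f⟩)² + σ₂²·⟨h,f⟩² + (c²σ₁² + σ₂²)·‖f‖² for f ∈ ℝ^d, and define f* := −(cσ₁²/(c²σ₁² + σ₂²))·(q/(1 + ‖h‖²))·h. Then Φ(f*) ≤ Φ(f) for all f ∈ ℝ^d, and the minimum value is Φ(f*) = σ₁²q²·(c²σ₁² + σ₂²(1 + ‖h‖²)) / ((c²σ₁² + σ₂²)(1 + ‖h‖²)). 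-/
open Matrix

private lemma dot_self_nonneg {d : ℕ} (v : Fin d → ℝ) : 0 ≤ v ⬝ᵥ v := by
  apply Finset.sum_nonneg
  intro i _
  exact mul_self_nonneg _

/-- Closed-form minimizer of the convex quadratic
`Φ(f) = σ₁²(q + c⟨h,f⟩)² + σ₂²⟨h,f⟩² + (c²σ₁² + σ₂²)‖f‖²`:
the minimum is attained at
`f* = −(cσ₁²/(c²σ₁² + σ₂²))·(q/(1 + ‖h‖²))·h`, with minimum value
`σ₁²q²(c²σ₁² + σ₂²(1 + ‖h‖²)) / ((c²σ₁² + σ₂²)(1 + ‖h‖²))`. -/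
theorem quadratic_feedback_column_minimizer {d : ℕ} (h : Fin d → ℝ)
    (q c σ₁ σ₂ : ℝ) (hpos : 0 < c ^ 2 * σ₁ ^ 2 + σ₂ ^ 2) :
    let Φ : (Fin d → ℝ) → ℝ := fun f =>
      σ₁ ^ 2 * (q + c * (h ⬝ᵥ f)) ^ 2 + σ₂ ^ 2 * (h ⬝ᵥ f) ^ 2
        + (c ^ 2 * σ₁ ^ 2 + σ₂ ^ 2) * (f ⬝ᵥ f)
    let fstar : Fin d → ℝ :=
      (-(c * σ₁ ^ 2 / (c ^ 2 * σ₁ ^ 2 + σ₂ ^ 2)) * (q / (1 + h ⬝ᵥ h))) • h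
    (∀ f : Fin d → ℝ, Φ fstar ≤ Φ f)
    ∧ Φ fstar = σ₁ ^ 2 * q ^ 2 * (c ^ 2 * σ₁ ^ 2 + σ₂ ^ 2 * (1 + h ⬝ᵥ h))
        / ((c ^ 2 * σ₁ ^ 2 + σ₂ ^ 2) * (1 + h ⬝ᵥ h)) := by
  intro Φ fstar
  set A : ℝ := c ^ 2 * σ₁ ^ 2 + σ₂ ^ 2 with hA
  set H : ℝ := h ⬝ᵥ h with hH
  have hH0 : 0 ≤ H := dot_self_nonneg h
  have h1H : (0:ℝ) < 1 + H := by linarith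
  have hAne : A ≠ 0 := ne_of_gt hpos
  have h1Hne : (1:ℝ) + H ≠ 0 := ne_of_gt h1H
  set t : ℝ := -(c * σ₁ ^ 2 / A) * (q / (1 + H)) with ht
  have hfs : fstar = t • h := rfl
  have hdot1 : h ⬝ᵥ fstar = t * H := by
    rw [hfs, dotProduct_smul, hH]; simp [smul_eq_mul]
  have hdot2 : fstar ⬝ᵥ fstar = t ^ 2 * H := by
    rw [hfs, dotProduct_smul, smul_dotProduct, hH]; simp [smul_eq_mul]; ring
  -- key relation: t * (1 + H) = -(c * σ₁^2 * q) / A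
  have htA : t * (1 + H) * A = -(c * σ₁ ^ 2 * q) := by
    rw [ht]; field_simp
  have hval : Φ fstar = σ₁ ^ 2 * q ^ 2 * (c ^ 2 * σ₁ ^ 2 + σ₂ ^ 2 * (1 + H))
      / (A * (1 + H)) := by
    show σ₁ ^ 2 * (q + c * (h ⬝ᵥ fstar)) ^ 2 + σ₂ ^ 2 * (h ⬝ᵥ fstar) ^ 2
        + A * (fstar ⬝ᵥ fstar) = _
    rw [hdot1, hdot2, ht]
    field_simp
    ring
  refine ⟨fun f => ?_, hval⟩
  have hdot3 : fstar ⬝ᵥ f = t * (h ⬝ᵥ f) := by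
    rw [hfs, smul_dotProduct]; simp [smul_eq_mul]
  have hdot4 : f ⬝ᵥ fstar = t * (h ⬝ᵥ f) := by
    rw [dotProduct_comm, hdot3]
  have key : Φ f = Φ fstar
      + A * ((f - fstar) ⬝ᵥ (f - fstar) + (h ⬝ᵥ (f - fstar)) ^ 2) := by
    show σ₁ ^ 2 * (q + c * (h ⬝ᵥ f)) ^ 2 + σ₂ ^ 2 * (h ⬝ᵥ f) ^ 2 + A * (f ⬝ᵥ f)
      = (σ₁ ^ 2 * (q + c * (h ⬝ᵥ fstar)) ^ 2 + σ₂ ^ 2 * (h ⬝ᵥ fstar) ^ 2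
        + A * (fstar ⬝ᵥ fstar)) + _
    rw [sub_dotProduct, dotProduct_sub, dotProduct_sub, dotProduct_sub,
      hdot1, hdot2, hdot3, hdot4]
    set x : ℝ := h ⬝ᵥ f
    linear_combination 2 * (x - t * H) * htA
  rw [key]
  have : 0 ≤ A * ((f - fstar) ⬝ᵥ (f - fstar) + (h ⬝ᵥ (f - fstar)) ^ 2) := by
    apply mul_nonneg (le_of_lt hpos)
    exact add_nonneg (dot_self_nonneg _) (sq_nonneg _)
  linarith
end

section
/- Let N ≥ 1 and σ₁, σ₂ ∈ ℝ. Let F₁ ∈ ℝ^{N×N} be strictly lower triangular, let F₂ ∈ ℝ^{N×N} be of subdiagonal form, and let g₁, g₂ ∈ ℝ^N with F₁g₂ = 0. Let M ≥ 0 satisfy |(F₂)_{ij}| ≤ M for all i, j. Then P₂(g₁,F₁,g₂,F₂) ≤ ‖g₂‖² + σ₁²‖F₂‖_F² + M²·P₁(g₁,F₁,g₂,F₂); that is, User 2's transmit power is bounded by ‖g₂‖² + σ₁²‖F₂‖_F² plus M² times User 1's transmit power. -/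
open Matrix

noncomputable section

/-- Entrywise formula for the squared Frobenius norm. -/
lemma frobSq_eq {N : ℕ} (A : Matrix (Fin N) (Fin N) ℝ) :
    frobSq A = ∑ i, ∑ j, (A i j)^2 := by
  simp only [frobSq, Matrix.trace, Matrix.mul_apply, Matrix.diag,
    Matrix.transpose_apply, sq]
  exact Finset.sum_comm

section aux
variable {N : ℕ} (F₂ : Matrix (Fin N) (Fin N) ℝ) (hF₂ : Subdiag F₂)
  (M : ℝ) (hM : 0 ≤ M) (hbound : ∀ i j : Fin N, |F₂ i j| ≤ M)

include hF₂ in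
lemma mulVec_sq (v : Fin N → ℝ) (i : Fin N) :
    (F₂.mulVec v i)^2 = ∑ j, (F₂ i j)^2 * (v j)^2 := by
  rw [Matrix.mulVec, dotProduct, sq, Finset.sum_mul_sum]
  refine Finset.sum_congr rfl fun j _ => ?_
  rw [Finset.sum_eq_single j]
  · ring
  · intro k _ hkj
    by_cases h : (i : ℕ) = (j : ℕ) + 1
    · have : F₂ i k = 0 := hF₂ i k (by
        intro hk; exact hkj (Fin.ext (by omega)))
      rw [this]; ring
    · rw [hF₂ i j h]; ring
  · intro h; exact absurd (Finset.mem_univ j) h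

include hF₂ hM hbound in
lemma col_sq_sum (j : Fin N) : ∑ i, (F₂ i j)^2 ≤ M^2 := by
  by_cases h : (j : ℕ) + 1 < N
  · rw [Finset.sum_eq_single (⟨(j : ℕ) + 1, h⟩ : Fin N)]
    · have := hbound ⟨(j : ℕ) + 1, h⟩ j
      nlinarith [abs_nonneg (F₂ ⟨(j : ℕ) + 1, h⟩ j), sq_abs (F₂ ⟨(j : ℕ) + 1, h⟩ j)]
    · intro i _ hi
      rw [hF₂ i j (by intro hij; exact hi (Fin.ext (by simpa using hij)))]; ring
    · intro h'; exact absurd (Finset.mem_univ _) h'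
  · have : ∀ i : Fin N, (F₂ i j)^2 = 0 := by
      intro i
      rw [hF₂ i j (by omega)]; ring
    simp only [this, Finset.sum_const_zero]
    positivity

include hF₂ hM hbound in
/-- Action of a subdiagonal matrix on a vector shrinks the norm by at most `M`. -/
lemma vec_bound (v : Fin N → ℝ) :
    (F₂.mulVec v) ⬝ᵥ (F₂.mulVec v) ≤ M^2 * (v ⬝ᵥ v) := by
  simp only [dotProduct, ← sq]
  calc ∑ i, (F₂.mulVec v i)^2 = ∑ i, ∑ j, (F₂ i j)^2 * (v j)^2 :=
        Finset.sum_congr rfl fun i _ => mulVec_sq F₂ hF₂ v i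
    _ = ∑ j, (∑ i, (F₂ i j)^2) * (v j)^2 := by
        rw [Finset.sum_comm]
        exact Finset.sum_congr rfl fun j _ => (Finset.sum_mul _ _ _).symm
    _ ≤ ∑ j, M^2 * (v j)^2 :=
        Finset.sum_le_sum fun j _ =>
          mul_le_mul_of_nonneg_right (col_sq_sum F₂ hF₂ M hM hbound j) (sq_nonneg _)
    _ = M^2 * ∑ j, (v j)^2 := (Finset.mul_sum _ _ _).symm

include hF₂ hM hbound in
/-- Left multiplication by a subdiagonal matrix shrinks the Frobenius norm
by at most `M`. -/
lemma mat_bound (A : Matrix (Fin N) (Fin N) ℝ) :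
    frobSq (F₂ * A) ≤ M^2 * frobSq A := by
  rw [frobSq_eq, frobSq_eq, Finset.sum_comm,
    Finset.sum_comm (s := Finset.univ) (f := fun i j => (A i j)^2), Finset.mul_sum]
  refine Finset.sum_le_sum fun j _ => ?_
  have := vec_bound F₂ hF₂ M hM hbound (fun k => A k j)
  simp only [dotProduct, ← sq] at this
  calc ∑ i, ((F₂ * A) i j)^2 = ∑ i, (F₂.mulVec (fun k => A k j) i)^2 := by
        refine Finset.sum_congr rfl fun i _ => ?_
        simp [Matrix.mul_apply, Matrix.mulVec, dotProduct]
    _ ≤ M^2 * ∑ k, (A k j)^2 := this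

end aux

/-- The cross term between `F₂` and `F₂F₁F₂` vanishes entrywise. -/
lemma cross_zero {N : ℕ} (F₁ F₂ : Matrix (Fin N) (Fin N) ℝ)
    (hF₁ : Slt F₁) (hF₂ : Subdiag F₂) :
    ∀ i j : Fin N, F₂ i j * ((F₂ * (F₁ * F₂)) i j) = 0 := by
  intro i j
  by_cases h : (i : ℕ) = (j : ℕ) + 1
  · have : (F₂ * (F₁ * F₂)) i j = 0 := by
      rw [Matrix.mul_apply]
      refine Finset.sum_eq_zero fun k _ => ?_
      by_cases hk : (i : ℕ) = (k : ℕ) + 1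
      · have : (F₁ * F₂) k j = 0 := by
          rw [Matrix.mul_apply]
          refine Finset.sum_eq_zero fun l _ => ?_
          by_cases hl : (l : ℕ) = (j : ℕ) + 1
          · have : F₁ k l = 0 := hF₁ k l (by rw [Fin.le_def]; omega)
            rw [this]; ring
          · rw [hF₂ l j hl]; ring
        rw [this]; ring
      · rw [hF₂ i k hk]; ring
    rw [this]; ring
  · rw [hF₂ i j h]; ring

lemma frobSq_split {N : ℕ} (F₁ F₂ : Matrix (Fin N) (Fin N) ℝ)
    (hF₁ : Slt F₁) (hF₂ : Subdiag F₂) :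
    frobSq (F₂ * (1 + F₁ * F₂)) = frobSq F₂ + frobSq (F₂ * (F₁ * F₂)) := by
  have hrw : F₂ * (1 + F₁ * F₂) = F₂ + F₂ * (F₁ * F₂) := by
    rw [mul_add, mul_one]
  rw [hrw, frobSq_eq, frobSq_eq, frobSq_eq, ← Finset.sum_add_distrib]
  refine Finset.sum_congr rfl fun i _ => ?_
  rw [← Finset.sum_add_distrib]
  refine Finset.sum_congr rfl fun j _ => ?_
  have := cross_zero F₁ F₂ hF₁ hF₂ i j
  simp only [Matrix.add_apply]
  nlinarith [this]

/-- If `F₁` is strictly lower triangular, `F₂` is of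
subdiagonal form with entries bounded by `M`, and `F₁ g₂ = 0`, then
`P₂ ≤ ‖g₂‖² + σ₁²‖F₂‖_F² + M²·P₁`. -/
theorem P2_upper_bound {N : ℕ} (hN : 1 ≤ N) (σ₁ σ₂ : ℝ)
    (F₁ F₂ : Matrix (Fin N) (Fin N) ℝ) (hF₁ : Slt F₁) (hF₂ : Subdiag F₂)
    (g₁ g₂ : Fin N → ℝ) (hFg : F₁.mulVec g₂ = 0)
    (M : ℝ) (hM : 0 ≤ M) (hbound : ∀ i j : Fin N, |F₂ i j| ≤ M) :
    P2 σ₁ σ₂ g₁ F₁ g₂ F₂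
      ≤ g₂ ⬝ᵥ g₂ + σ₁ ^ 2 * frobSq F₂ + M ^ 2 * P1 σ₁ σ₂ g₁ F₁ g₂ F₂ := by
  have hvec : (1 + F₂ * F₁).mulVec g₂ = g₂ := by
    rw [Matrix.add_mulVec, Matrix.one_mulVec, ← Matrix.mulVec_mulVec, hFg,
      Matrix.mulVec_zero, add_zero]
  have h1 : (F₂.mulVec g₁) ⬝ᵥ (F₂.mulVec g₁) ≤ M^2 * (g₁ ⬝ᵥ g₁) :=
    vec_bound F₂ hF₂ M hM hbound g₁
  have h2 : frobSq (F₂ * (F₁ * F₂)) ≤ M^2 * frobSq (F₁ * F₂) :=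
    mat_bound F₂ hF₂ M hM hbound (F₁ * F₂)
  have h3 : frobSq (F₂ * F₁) ≤ M^2 * frobSq F₁ :=
    mat_bound F₂ hF₂ M hM hbound F₁
  have hsplit := frobSq_split F₁ F₂ hF₁ hF₂
  have hdz : (F₁.mulVec g₂) ⬝ᵥ (F₁.mulVec g₂) = 0 := by
    rw [hFg]; simp
  rw [P2, P1, hvec, hsplit, hdz]
  nlinarith [sq_nonneg σ₁, sq_nonneg σ₂, h1, h2, h3,
    mul_le_mul_of_nonneg_left h2 (sq_nonneg σ₁),
    mul_le_mul_of_nonneg_left h3 (sq_nonneg σ₂)]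

end
end
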